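/- Let W be an algebraic Weyl curvature tensor on a Euclidean vector space V of dimension n ≥ 4. The skew-symmetric part of any element of E_W is annihilated by W restricted to 2-forms; that is, if h ∈ E_W and π⁻ : End(V) → Λ²(V) is the orthogonal projection onto skew-symmetric endomorphisms, then W(π⁻h) = 0. -/
import Mathlib


/- Common setup: algebraic Weyl curvature tensors on a Euclidean vector space. -/

open scoped RealInnerProductSpace
open Finset

/-- A curvature-type 4-linear tensor on `V`. -/
abbrev Tensor4 (V : Type*) [NormedAddCommGroup V] [InnerProductSpace ℝ V] : Type _ :=
  V →ₗ[ℝ] V →ₗ[ℝ] V →ₗ[ℝ] V →ₗ[ℝ] ℝ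

variable {V : Type*} [NormedAddCommGroup V] [InnerProductSpace ℝ V] [FiniteDimensional ℝ V]

/-- `W` is an algebraic Weyl curvature tensor: it has the symmetries of a curvature
tensor, satisfies the first Bianchi identity, and is totally trace-free. -/
structure IsWeylTensor (W : Tensor4 V) : Prop where
  antisym₁ : ∀ x y z u, W x y z u = - W y x z u
  antisym₂ : ∀ x y z u, W x y z u = - W x y u z
  pair_symm : ∀ x y z u, W x y z u = W z u x y
  bianchi : ∀ x y z u, W x y z u + W y z x u + W z x y u = 0
  trace_free : ∀ (b : OrthonormalBasis (Fin (Module.finrank ℝ V)) ℝ V) (x y : V),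
      ∑ i, W x (b i) y (b i) = 0

/-- The extension of `W` to endomorphisms, `W(h) = Σᵢ W(eᵢ, ·, h eᵢ, ·)`,
viewed as a bilinear form (identified with an endomorphism via the metric). -/
noncomputable def weylExt {ι : Type*} [Fintype ι]
    (W : Tensor4 V) (b : OrthonormalBasis ι ℝ V) (h : V →ₗ[ℝ] V) (v w : V) : ℝ :=
  ∑ i, W (b i) v (h (b i)) w

/-- The space `E_W`: endomorphisms `h` with `W(x,y,hz,·) + W(y,z,hx,·) + W(z,x,hy,·) = 0`. -/
def memE (W : Tensor4 V) (h : V →ₗ[ℝ] V) : Prop :=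
  ∀ x y z u, W x y (h z) u + W y z (h x) u + W z x (h y) u = 0

/-- The Lie algebra `g_W` of the symmetry group of `W`. -/
def memG (W : Tensor4 V) (h : V →ₗ[ℝ] V) : Prop :=
  ∀ x y z u, W (h x) y z u + W x (h y) z u + W x y (h z) u + W x y z (h u) = 0

/-- Skew-symmetric endomorphisms (identified with 2-forms). -/
def IsSkew (F : V →ₗ[ℝ] V) : Prop := ∀ v w, ⟪F v, w⟫ = - ⟪v, F w⟫

/-- Symmetric endomorphisms. -/
def IsSym (F : V →ₗ[ℝ] V) : Prop := ∀ v w, ⟪F v, w⟫ = ⟪v, F w⟫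

/-- The bilinear form `g(F·,·)` associated to an endomorphism `F`. -/
noncomputable def form (F : V →ₗ[ℝ] V) (v w : V) : ℝ := ⟪F v, w⟫

/-- if `h ∈ E_W` then its skew-symmetric part `π⁻h = (h − h*)/2` is
annihilated by `W` restricted to 2-forms. -/
theorem stmt6 (hn : 4 ≤ Module.finrank ℝ V) (W : Tensor4 V) (hW : IsWeylTensor W)
    (b : OrthonormalBasis (Fin (Module.finrank ℝ V)) ℝ V)
    (h : V →ₗ[ℝ] V) (hE : memE W h) :
    ∀ v w, weylExt W b ((1 / 2 : ℝ) • (h - LinearMap.adjoint h)) v w = 0 := by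

  intro v w
  classical
  set d : Fin (Module.finrank ℝ V) → Fin (Module.finrank ℝ V) → ℝ :=
    fun i j => ⟪h (b i), b j⟫ with hd
  set c : Fin (Module.finrank ℝ V) → Fin (Module.finrank ℝ V) → ℝ :=
    fun i j => (1/2) * (d i j - d j i) with hc
  have hcskew : ∀ i j, c j i = - c i j := by
    intro i j; simp only [hc]; ring
  -- expansion of h on the basis
  have hexph : ∀ i, h (b i) = ∑ j, d i j • b j := by
    intro i
    rw [← b.sum_repr (h (b i))]
    refine Finset.sum_congr rfl fun j _ => ?_
    rw [b.repr_apply_apply, hd, real_inner_comm]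
  -- expansion of the skew part on the basis
  have hexp : ∀ i, ((1 / 2 : ℝ) • (h - LinearMap.adjoint h)) (b i) = ∑ j, c i j • b j := by
    intro i
    rw [← b.sum_repr (((1 / 2 : ℝ) • (h - LinearMap.adjoint h)) (b i))]
    refine Finset.sum_congr rfl fun j _ => ?_
    congr 1
    rw [b.repr_apply_apply, hc, hd]
    simp only [LinearMap.smul_apply, LinearMap.sub_apply, inner_smul_right, inner_sub_right,
      LinearMap.adjoint_inner_right]
    rw [real_inner_comm (b j) (h (b i))]
  -- key contraction identity A : ∑ᵢ W x y (h eᵢ) eᵢ = 0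
  have A : ∀ x y : V, ∑ i, ∑ j, d i j * W x y (b j) (b i) = 0 := by
    intro x y
    have h0 : ∑ i, W x y (h (b i)) (b i) = 0 := by
      have hsum : ∑ i, (W x y (h (b i)) (b i) + W y (b i) (h x) (b i)
          + W (b i) x (h y) (b i)) = 0 :=
        Finset.sum_eq_zero fun i _ => hE x y (b i) (b i)
      rw [Finset.sum_add_distrib, Finset.sum_add_distrib] at hsum
      have t1 : ∑ i, W y (b i) (h x) (b i) = 0 := hW.trace_free b y (h x)
      have t2 : ∑ i, W (b i) x (h y) (b i) = 0 := by
        have : ∑ i, W (b i) x (h y) (b i) = ∑ i, -(W x (b i) (h y) (b i)) :=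
          Finset.sum_congr rfl fun i _ => hW.antisym₁ _ _ _ _
        rw [this, Finset.sum_neg_distrib, hW.trace_free b x (h y), neg_zero]
      linarith
    rw [← h0]
    refine Finset.sum_congr rfl fun i _ => ?_
    rw [hexph i]
    simp [Finset.mul_sum, mul_comm]
  -- c-contraction identity A' : ∑ᵢⱼ c i j * W x y eⱼ eᵢ = 0
  have A' : ∀ x y : V, ∑ i, ∑ j, c i j * W x y (b j) (b i) = 0 := by
    intro x y
    have e1 : ∑ i, ∑ j, c i j * W x y (b j) (b i)
        = (1/2) * (∑ i, ∑ j, d i j * W x y (b j) (b i))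
          - (1/2) * (∑ i, ∑ j, d j i * W x y (b j) (b i)) := by
      rw [Finset.mul_sum, Finset.mul_sum, ← Finset.sum_sub_distrib]
      refine Finset.sum_congr rfl fun i _ => ?_
      rw [Finset.mul_sum, Finset.mul_sum, ← Finset.sum_sub_distrib]
      refine Finset.sum_congr rfl fun j _ => ?_
      simp only [hc]; ring
    have e2 : ∑ i, ∑ j, d j i * W x y (b j) (b i) = 0 := by
      rw [Finset.sum_comm]
      have step : ∑ i, ∑ j, d i j * W x y (b i) (b j)
          = ∑ i, ∑ j, -(d i j * W x y (b j) (b i)) :=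
        Finset.sum_congr rfl fun i _ => Finset.sum_congr rfl fun j _ => by
          rw [hW.antisym₂ x y (b i) (b j)]; ring
      rw [step]
      simp only [Finset.sum_neg_distrib]
      rw [A x y, neg_zero]
    rw [e1, e2, A x y]; ring
  -- rewrite the goal as the double sum T
  have hT : weylExt W b ((1 / 2 : ℝ) • (h - LinearMap.adjoint h)) v w
      = ∑ i, ∑ j, c i j * W (b i) v (b j) w := by
    unfold weylExt
    refine Finset.sum_congr rfl fun i _ => ?_
    rw [hexp i]
    simp [Finset.mul_sum, mul_comm]
  rw [hT]
  set T := ∑ i, ∑ j, c i j * W (b i) v (b j) w with hTdef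
  -- Bianchi contraction
  have hB : ∑ i, ∑ j, c i j * (W (b i) (b j) v w + W (b j) v (b i) w + W v (b i) (b j) w)
      = 0 :=
    Finset.sum_eq_zero fun i _ => Finset.sum_eq_zero fun j _ => by
      rw [hW.bianchi (b i) (b j) v w, mul_zero]
  have hsplit : ∑ i, ∑ j, c i j * (W (b i) (b j) v w + W (b j) v (b i) w + W v (b i) (b j) w)
      = (∑ i, ∑ j, c i j * W (b i) (b j) v w) + (∑ i, ∑ j, c i j * W (b j) v (b i) w)
        + (∑ i, ∑ j, c i j * W v (b i) (b j) w) := by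
    rw [← Finset.sum_add_distrib, ← Finset.sum_add_distrib]
    refine Finset.sum_congr rfl fun i _ => ?_
    rw [← Finset.sum_add_distrib, ← Finset.sum_add_distrib]
    exact Finset.sum_congr rfl fun j _ => by ring
  have hS1 : ∑ i, ∑ j, c i j * W (b i) (b j) v w = 0 := by
    have : ∑ i, ∑ j, c i j * W (b i) (b j) v w
        = ∑ i, ∑ j, -(c i j * W v w (b j) (b i)) := by
      refine Finset.sum_congr rfl fun i _ => Finset.sum_congr rfl fun j _ => ?_
      rw [hW.pair_symm (b i) (b j) v w, hW.antisym₂ v w (b i) (b j)]; ring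
    simp only [this, Finset.sum_neg_distrib]
    rw [A' v w, neg_zero]
  have hS2 : ∑ i, ∑ j, c i j * W (b j) v (b i) w = - T := by
    rw [Finset.sum_comm]
    have : ∑ j, ∑ i, c i j * W (b j) v (b i) w
        = ∑ j, ∑ i, -(c j i * W (b j) v (b i) w) := by
      refine Finset.sum_congr rfl fun j _ => Finset.sum_congr rfl fun i _ => ?_
      rw [hcskew j i]; ring
    rw [this]
    simp only [Finset.sum_neg_distrib, hTdef]
  have hS3 : ∑ i, ∑ j, c i j * W v (b i) (b j) w = - T := by
    have : ∑ i, ∑ j, c i j * W v (b i) (b j) w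
        = ∑ i, ∑ j, -(c i j * W (b i) v (b j) w) := by
      refine Finset.sum_congr rfl fun i _ => Finset.sum_congr rfl fun j _ => ?_
      rw [hW.antisym₁ v (b i) (b j) w]; ring
    simp only [this, Finset.sum_neg_distrib, hTdef]
  rw [hsplit, hS1, hS2, hS3] at hB
  linarith
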